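/- If a nonempty word w over an alphabet A has maximal border ε, then for every integer n ≥ 2 and 0 ≤ k < n, the language ModCount(w, k, n) of words v with |v|_w ≡ k (mod n) equals [Count(w,0)·w]^k · ([Count(w,0)·w]^n)* · Count(w,0). -/

import Mathlib

/-!
An unbordered word `w` cannot overlap itself, so in `u ++ w ++ v` every occurrence of `w` lies
inside `u`, is the displayed one, or lies inside `v`: `|u w v|_w = |u|_w + 1 + |v|_w`. Cutting a
word at its first occurrence of `w` then gives `Count(w, m+1) = Count(w,0) · w · Count(w,m)`, hence
`Count(w, m) = (Count(w,0) · w)^m · Count(w,0)`. Finally `ModCount(w,k,n)` is the union over `j` of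
`Count(w, k + n j)`, and `L^k (L^n)* C = ⋃ⱼ L^(k + n j) C`.
-/

/-- Number of occurrences of `w` as a contiguous subword (factor) of `v`. -/
def countOcc {α : Type*} [DecidableEq α] (w v : List α) : ℕ :=
  ((List.range (v.length + 1)).filter (fun i => decide (w <+: v.drop i))).length

/-- `Count w k`: the language of words containing exactly `k` occurrences of `w`
as a contiguous subword. -/
def Count {α : Type*} [DecidableEq α] (w : List α) (k : ℕ) : Language α :=
  {v | countOcc w v = k}

def Unbordered {α : Type*} (w : List α) : Prop :=
  ∀ u : List α, u <+: w → u <:+ w → u ≠ w → u = []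

namespace Unbordered

variable {α : Type*} {w s u v : List α}

theorem eq_nil_of_isPrefix_append (hw : Unbordered w) (hs : s <:+ w) (hsw : s ≠ w)
    (hpre : s <+: w ++ v) : s = [] :=
  hw s (List.prefix_of_prefix_length_le hpre (List.prefix_append w v) hs.length_le) hs hsw

theorem not_isPrefix_append (hw : Unbordered w) (hs : s <:+ w) (hsw : s ≠ w) (hs₀ : s ≠ []) :
    ¬ w <+: s ++ v := by
  rintro ⟨t, ht⟩
  exact hs₀ (hw.eq_nil_of_isPrefix_append hs hsw ⟨v, ht.symm⟩)

theorem isPrefix_append_append_iff (hw : Unbordered w) (hu : u ≠ []) :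
    w <+: u ++ w ++ v ↔ w <+: u := by
  refine ⟨fun ⟨t, ht⟩ => ?_, fun h => h.trans (List.prefix_append_of_prefix ?_)⟩
  · rw [List.append_assoc, List.append_eq_append_iff] at ht
    obtain ⟨a, rfl, -⟩ | ⟨b, rfl, hb⟩ := ht
    · exact List.prefix_append w a
    · have hbw : b ≠ u ++ b := fun h => hu (by simpa using h.symm)
      rw [hw.eq_nil_of_isPrefix_append (List.suffix_append u b) hbw ⟨t, hb.symm⟩,
        List.append_nil]
  · exact List.prefix_append u w

end Unbordered

section countOcc

variable {α : Type*} [DecidableEq α] {w : List α}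

theorem countOcc_cons (w : List α) (a : α) (v : List α) :
    countOcc w (a :: v) = (if w <+: a :: v then 1 else 0) + countOcc w v := by
  simp only [countOcc, List.length_cons, List.range_succ_eq_map, List.filter_cons,
    List.filter_map, List.drop_zero]
  split_ifs <;> simp_all [Function.comp_def, add_comm]

theorem countOcc_nil (hw₀ : w ≠ []) : countOcc w [] = 0 := by
  simp [countOcc, hw₀]

theorem Unbordered.countOcc_append_of_isSuffix (hw : Unbordered w) {s : List α}
    (hs : s <:+ w) (hsw : s ≠ w) (v : List α) : countOcc w (s ++ v) = countOcc w v := by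
  induction s with
  | nil => rfl
  | cons a s ih =>
    have hs' : s <:+ w := (List.suffix_cons a s).trans hs
    have hsw' : s ≠ w := fun h => by simpa [h] using hs.length_le
    rw [List.cons_append, countOcc_cons, ← List.cons_append,
      if_neg (hw.not_isPrefix_append hs hsw (List.cons_ne_nil a s)), ih hs' hsw', zero_add]

theorem Unbordered.countOcc_append_self (hw : Unbordered w) (hw₀ : w ≠ []) (v : List α) :
    countOcc w (w ++ v) = countOcc w v + 1 := by
  obtain ⟨a, t, rfl⟩ := List.exists_cons_of_ne_nil hw₀
  have htw : t ≠ a :: t := fun h => by simpa using congrArg List.length h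
  rw [List.cons_append, countOcc_cons, ← List.cons_append, if_pos (List.prefix_append _ v),
    hw.countOcc_append_of_isSuffix (List.suffix_cons a t) htw, add_comm]

theorem Unbordered.countOcc_append_append (hw : Unbordered w) (hw₀ : w ≠ []) (u v : List α) :
    countOcc w (u ++ w ++ v) = countOcc w u + 1 + countOcc w v := by
  induction u with
  | nil => rw [List.nil_append, hw.countOcc_append_self hw₀, countOcc_nil hw₀]; omega
  | cons a u ih =>
    have hpre := hw.isPrefix_append_append_iff (u := a :: u) (v := v) (List.cons_ne_nil a u)
    rw [List.cons_append, List.cons_append, countOcc_cons, ← List.cons_append,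
      ← List.cons_append]
    simp only [hpre, ih, countOcc_cons]
    omega

theorem exists_eq_append_append_of_countOcc_pos (hw₀ : w ≠ []) {v : List α}
    (hv : 0 < countOcc w v) : ∃ u r, v = u ++ w ++ r ∧ countOcc w u = 0 := by
  induction v with
  | nil => simp [countOcc_nil hw₀] at hv
  | cons a v ih =>
    by_cases hpre : w <+: a :: v
    · obtain ⟨r, hr⟩ := hpre
      exact ⟨[], r, by simp [hr], countOcc_nil hw₀⟩
    · rw [countOcc_cons, if_neg hpre, zero_add] at hv
      obtain ⟨u, r, rfl, hu⟩ := ih hv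
      refine ⟨a :: u, r, rfl, ?_⟩
      have hpre' : ¬ w <+: a :: u := fun h => hpre (h.trans (by simp [List.append_assoc]))
      rw [countOcc_cons, if_neg hpre', hu]

end countOcc

section Count

variable {α : Type*} [DecidableEq α] {w : List α}

theorem mem_count {k : ℕ} {v : List α} : v ∈ Count w k ↔ countOcc w v = k := Iff.rfl

theorem Unbordered.count_succ (hw : Unbordered w) (hw₀ : w ≠ []) (m : ℕ) :
    Count w (m + 1) = Count w 0 * {w} * Count w m := by
  ext v
  simp only [Language.mem_mul, mem_count]
  constructor
  · intro hv
    have hpos : 0 < countOcc w v := hv ▸ m.succ_pos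
    obtain ⟨u, r, rfl, hu⟩ := exists_eq_append_append_of_countOcc_pos hw₀ hpos
    rw [hw.countOcc_append_append hw₀, hu] at hv
    exact ⟨u ++ w, ⟨u, hu, w, rfl, rfl⟩, r, by omega, rfl⟩
  · rintro ⟨_, ⟨u, hu, _, rfl, rfl⟩, r, hr, rfl⟩
    rw [hw.countOcc_append_append hw₀, hu, hr]
    omega

theorem Unbordered.count_eq_pow_mul (hw : Unbordered w) (hw₀ : w ≠ []) (m : ℕ) :
    Count w m = (Count w 0 * {w}) ^ m * Count w 0 := by
  induction m with
  | zero => rw [pow_zero, one_mul]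
  | succ m ih => rw [hw.count_succ hw₀, ih, pow_succ', mul_assoc (Count w 0 * {w})]

end Count

theorem exists_eq_add_mul_iff_mod_eq {c n k : ℕ} (hk : k < n) :
    (∃ j, c = k + n * j) ↔ c % n = k := by
  constructor
  · rintro ⟨j, rfl⟩
    rw [Nat.add_mul_mod_self_left, Nat.mod_eq_of_lt hk]
  · intro h
    exact ⟨c / n, by rw [← h, Nat.mod_add_div]⟩

theorem stmt5_general {α : Type*} [DecidableEq α] (w : List α) (hw : w ≠ [])
    (hborder : ∀ u : List α, u <+: w → u <:+ w → u ≠ w → u = [])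
    (n k : ℕ) (hk : k < n) :
    {v | countOcc w v % n = k}
      = (Count w 0 * ({w} : Language α)) ^ k
          * KStar.kstar ((Count w 0 * ({w} : Language α)) ^ n) * Count w 0 := by
  have hunb : Unbordered w := hborder
  rw [Language.kstar_eq_iSup_pow, Language.mul_iSup, Language.iSup_mul]
  simp only [← pow_mul, ← pow_add, ← hunb.count_eq_pow_mul hw]
  refine Language.ext fun v => ?_
  rw [Language.mem_iSup]
  exact (exists_eq_add_mul_iff_mod_eq hk).symm

theorem stmt5 {α : Type*} [DecidableEq α] (w : List α) (hw : w ≠ [])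
    (hborder : ∀ u : List α, u <+: w → u <:+ w → u ≠ w → u = [])
    (n k : ℕ) (hn : 2 ≤ n) (hk : k < n) :
    {v | countOcc w v % n = k}
      = (Count w 0 * ({w} : Language α)) ^ k
          * KStar.kstar ((Count w 0 * ({w} : Language α)) ^ n) * Count w 0 :=
  stmt5_general w hw hborder n k hk
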